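/- arXiv:1705.01316 — 2 statements merged into one kernel-verified Lean document; each statement's English description precedes it below -/
import Mathlib

section
/- Let α > 0. The constant 2/α in the continuous Hilbert-type inequality is optimal: for every ε > 0 there exist nonnegative functions f, g ∈ L²(0,∞) with nonzero norms such that ∫_0^∞ ∫_0^∞ K_α(x,y) f(x) g(y) dy dx ≥ (2/α − ε) · ‖f‖_{L²(0,∞)} ‖g‖_{L²(0,∞)}. -/
/-!
Test against `f_T = g_T = x^{-1/2} · 1_{[1,T]}`, so that `‖f_T‖² = log T`. Since
`K_α(x,y) (xy)^{-1/2} = min(x,y)^{α-1} max(x,y)^{-α-1}`, the form is computed in closed form as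
`(2/α) log T - 2(1 - T^{-α})/α² ≥ (2/α) log T - 2/α²`; taking `log T = 2/(α²ε)` turns the loss
`2/α²` into exactly `ε ‖f_T‖ ‖g_T‖`.
-/

open MeasureTheory

open Set Real intervalIntegral

noncomputable section

lemma integral_Ioi_indicator_Icc (F : ℝ → ℝ) {a b : ℝ} (ha : 0 < a) (hab : a ≤ b) :
    ∫ x in Ioi 0, (Icc a b).indicator F x = ∫ x in a..b, F x := by
  have hsub : Icc a b ⊆ Ioi 0 := fun _ hx => ha.trans_le hx.1
  rw [setIntegral_indicator measurableSet_Icc, inter_eq_right.2 hsub,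
    integral_Icc_eq_integral_Ioc, integral_of_le hab]

def hilbertKernel (α x y : ℝ) : ℝ := (x * y) ^ (α - 1/2) / (max x y) ^ (2*α)

lemma hilbertKernel_comm (α x y : ℝ) : hilbertKernel α x y = hilbertKernel α y x := by
  rw [hilbertKernel, hilbertKernel, mul_comm, max_comm]

lemma hilbertKernel_mul_rpow_neg_half_of_le {α x y : ℝ} (hy : 0 < y) (hyx : y ≤ x) :
    hilbertKernel α x y * x ^ (-(1/2) : ℝ) * y ^ (-(1/2) : ℝ) = x ^ (-α-1) * y ^ (α-1) := by
  have hx : 0 < x := hy.trans_le hyx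
  simp only [hilbertKernel, max_eq_left hyx, rpow_def_of_pos hx, rpow_def_of_pos hy,
    rpow_def_of_pos (mul_pos hx hy), log_mul hx.ne' hy.ne', ← exp_add, ← exp_sub]
  congr 1
  ring

lemma continuousOn_hilbertKernel_mul_rpow_neg_half (α x : ℝ) (hx : 0 < x) :
    ContinuousOn (fun y => hilbertKernel α x y * x ^ (-(1/2) : ℝ) * y ^ (-(1/2) : ℝ))
      (Ioi 0) := by
  intro y (hy : 0 < y)
  unfold hilbertKernel
  apply ContinuousAt.continuousWithinAt
  have : max x y ≠ 0 := (lt_max_of_lt_left hx).ne'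
  fun_prop (disch := first | positivity | exact Or.inl (by positivity) | assumption)

lemma integral_hilbertKernel_mul_rpow_neg_half {α x T : ℝ} (hα : α ≠ 0) (h1x : 1 ≤ x)
    (hxT : x ≤ T) :
    ∫ y in 1..T, hilbertKernel α x y * x ^ (-(1/2) : ℝ) * y ^ (-(1/2) : ℝ)
      = (2 * x⁻¹ - x ^ (-α-1) - T ^ (-α) * x ^ (α-1)) / α := by
  have hx : 0 < x := one_pos.trans_le h1x
  have hT : 0 < T := hx.trans_le hxT
  have hint {a b : ℝ} (ha : 0 < a) (hab : a ≤ b) : IntervalIntegrable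
      (fun y => hilbertKernel α x y * x ^ (-(1/2) : ℝ) * y ^ (-(1/2) : ℝ)) volume a b :=
    ((continuousOn_hilbertKernel_mul_rpow_neg_half α x hx).mono
      (uIcc_of_le hab ▸ fun _ hy => ha.trans_le hy.1)).intervalIntegrable
  have hα1 : α - 1 ≠ -1 := by contrapose! hα; linarith
  have hα2 : -α - 1 ≠ -1 := by contrapose! hα; linarith
  have below : ∫ y in 1..x, hilbertKernel α x y * x ^ (-(1/2) : ℝ) * y ^ (-(1/2) : ℝ)
      = x ^ (-α-1) * ((x ^ α - 1) / α) := by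
    rw [integral_congr (g := fun y => x ^ (-α-1) * y ^ (α-1)),
      intervalIntegral.integral_const_mul,
      integral_rpow (Or.inr ⟨hα1, notMem_uIcc_of_lt one_pos hx⟩), sub_add_cancel, one_rpow]
    intro y hy
    rw [uIcc_of_le h1x] at hy
    exact hilbertKernel_mul_rpow_neg_half_of_le (one_pos.trans_le hy.1) hy.2
  have above : ∫ y in x..T, hilbertKernel α x y * x ^ (-(1/2) : ℝ) * y ^ (-(1/2) : ℝ)
      = x ^ (α-1) * ((T ^ (-α) - x ^ (-α)) / (-α)) := by
    rw [integral_congr (g := fun y => x ^ (α-1) * y ^ (-α-1)),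
      intervalIntegral.integral_const_mul,
      integral_rpow (Or.inr ⟨hα2, notMem_uIcc_of_lt hx hT⟩), sub_add_cancel]
    intro y hy
    rw [uIcc_of_le hxT] at hy
    dsimp only
    rw [hilbertKernel_comm, mul_right_comm, hilbertKernel_mul_rpow_neg_half_of_le hx hy.1, mul_comm]
  have e1 : x ^ (-α-1) * x ^ α = x⁻¹ := by rw [← rpow_add hx, ← rpow_neg_one]; ring_nf
  have e2 : x ^ (α-1) * x ^ (-α) = x⁻¹ := by rw [← rpow_add hx, ← rpow_neg_one]; ring_nf
  rw [← integral_add_adjacent_intervals (hint one_pos h1x) (hint hx hxT), below, above]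
  linear_combination e1 / α + e2 / α

def truncInvSqrt (T : ℝ) : ℝ → ℝ := (Icc 1 T).indicator fun x => x ^ (-(1/2) : ℝ)

lemma truncInvSqrt_nonneg (T x : ℝ) : 0 ≤ truncInvSqrt T x :=
  indicator_nonneg (fun _ hx => rpow_nonneg (zero_le_one.trans hx.1) _) x

lemma sq_truncInvSqrt (T x : ℝ) : truncInvSqrt T x ^ 2 = (Icc 1 T).indicator (·⁻¹) x := by
  by_cases hx : x ∈ Icc 1 T
  · rw [truncInvSqrt, indicator_of_mem hx, indicator_of_mem hx, ← rpow_natCast,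
      ← rpow_mul (zero_le_one.trans hx.1)]
    norm_num [rpow_neg_one]
  · simp [truncInvSqrt, indicator_of_notMem hx]

lemma integrableOn_sq_truncInvSqrt (T : ℝ) :
    IntegrableOn (fun x => truncInvSqrt T x ^ 2) (Ioi 0) := by
  simp_rw [sq_truncInvSqrt]
  refine (integrable_indicator_iff measurableSet_Icc).2 ?_ |>.integrableOn
  exact ContinuousOn.integrableOn_Icc fun x hx =>
    (continuousAt_inv₀ (one_pos.trans_le hx.1).ne').continuousWithinAt

lemma integral_sq_truncInvSqrt {T : ℝ} (hT : 1 ≤ T) :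
    ∫ x in Ioi 0, truncInvSqrt T x ^ 2 = log T := by
  simp_rw [sq_truncInvSqrt]
  rw [integral_Ioi_indicator_Icc _ one_pos hT,
    integral_inv_of_pos one_pos (one_pos.trans_le hT), div_one]

lemma integral_integral_hilbertKernel_truncInvSqrt {α T : ℝ} (hα : α ≠ 0) (hT : 1 ≤ T) :
    ∫ x in Ioi 0, ∫ y in Ioi 0, hilbertKernel α x y * truncInvSqrt T x * truncInvSqrt T y
      = (2 * log T - 2 * (1 - T ^ (-α)) / α) / α := by
  have hT0 : 0 < T := one_pos.trans_le hT
  have inner (x : ℝ) : ∫ y in Ioi 0, hilbertKernel α x y * truncInvSqrt T x * truncInvSqrt T y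
      = (Icc 1 T).indicator (fun x => (2 * x⁻¹ - x ^ (-α-1) - T ^ (-α) * x ^ (α-1)) / α) x := by
    by_cases hx : x ∈ Icc 1 T
    · simp only [truncInvSqrt, indicator_of_mem hx]
      simp only [← indicator_mul_right _ fun y => hilbertKernel α x y * x ^ (-(1/2) : ℝ)]
      rw [integral_Ioi_indicator_Icc _ one_pos hT,
        integral_hilbertKernel_mul_rpow_neg_half hα hx.1 hx.2]
    · simp [truncInvSqrt, indicator_of_notMem hx]
  have h0 : (0:ℝ) ∉ uIcc 1 T := notMem_uIcc_of_lt one_pos hT0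
  have hα1 : α - 1 ≠ -1 := by contrapose! hα; linarith
  have hα2 : -α - 1 ≠ -1 := by contrapose! hα; linarith
  have hinv : IntervalIntegrable (·⁻¹) volume 1 T := intervalIntegrable_inv_iff.2 (Or.inr h0)
  have hpow (r : ℝ) : IntervalIntegrable (· ^ r) volume 1 T := intervalIntegrable_rpow (Or.inr h0)
  have hT1 : T ^ (-α) * T ^ α = 1 := by rw [← rpow_add hT0, neg_add_cancel, rpow_zero]
  simp_rw [inner]
  rw [integral_Ioi_indicator_Icc _ one_pos hT, intervalIntegral.integral_div,
    intervalIntegral.integral_sub ((hinv.const_mul 2).sub (hpow _)) ((hpow _).const_mul _),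
    intervalIntegral.integral_sub (hinv.const_mul 2) (hpow _),
    intervalIntegral.integral_const_mul, intervalIntegral.integral_const_mul,
    integral_inv_of_pos one_pos hT0, integral_rpow (Or.inr ⟨hα2, h0⟩),
    integral_rpow (Or.inr ⟨hα1, h0⟩)]
  simp only [sub_add_cancel, one_rpow, div_one]
  linear_combination -hT1 / α ^ 2

end

/-- For `α > 0` the constant `2/α` in the continuous Hilbert-type inequality is optimal:
for every `ε > 0` there are nonnegative `f, g ∈ L²(0,∞)` with nonzero norms such that
`∫₀^∞ ∫₀^∞ (xy)^{α-1/2} / max(x,y)^{2α} f(x) g(y) dy dx ≥ (2/α - ε) ‖f‖_{L²} ‖g‖_{L²}`. -/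
theorem continuous_form_sharpness (α : ℝ) (hα : 0 < α) (ε : ℝ) (hε : 0 < ε) :
    ∃ f g : ℝ → ℝ, Measurable f ∧ Measurable g ∧
      (∀ x ∈ Set.Ioi (0:ℝ), 0 ≤ f x) ∧ (∀ x ∈ Set.Ioi (0:ℝ), 0 ≤ g x) ∧
      IntegrableOn (fun x => f x ^ 2) (Set.Ioi 0) ∧
      IntegrableOn (fun x => g x ^ 2) (Set.Ioi 0) ∧
      0 < Real.sqrt (∫ x in Set.Ioi (0:ℝ), f x ^ 2) ∧
      0 < Real.sqrt (∫ x in Set.Ioi (0:ℝ), g x ^ 2) ∧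
      (2/α - ε) * (Real.sqrt (∫ x in Set.Ioi (0:ℝ), f x ^ 2) *
          Real.sqrt (∫ x in Set.Ioi (0:ℝ), g x ^ 2))
        ≤ ∫ x in Set.Ioi (0:ℝ), ∫ y in Set.Ioi (0:ℝ),
            (x * y) ^ (α - 1/2) / (max x y) ^ (2*α) * f x * g y := by
  set L := 2 / (α ^ 2 * ε) with hL_def
  have hL : 0 < L := by positivity
  have hT : 1 ≤ exp L := one_le_exp hL.le
  have hnorm : ∫ x in Ioi 0, truncInvSqrt (exp L) x ^ 2 = L := by
    rw [integral_sq_truncInvSqrt hT, log_exp]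
  have hmeas : Measurable (truncInvSqrt (exp L)) :=
    (measurable_id.pow_const _).indicator measurableSet_Icc
  have hsqrt : 0 < √(∫ x in Ioi 0, truncInvSqrt (exp L) x ^ 2) := by rwa [hnorm, sqrt_pos]
  refine ⟨_, _, hmeas, hmeas, fun x _ => truncInvSqrt_nonneg _ x,
    fun x _ => truncInvSqrt_nonneg _ x, integrableOn_sq_truncInvSqrt _,
    integrableOn_sq_truncInvSqrt _, hsqrt, hsqrt, ?_⟩
  have hform := integral_integral_hilbertKernel_truncInvSqrt hα.ne' hT
  unfold hilbertKernel at hform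
  rw [hform, hnorm, mul_self_sqrt hL.le, log_exp]
  calc (2 / α - ε) * L ≤ (2 / α - ε) * L + 2 * exp L ^ (-α) / α ^ 2 :=
        le_add_of_nonneg_right (by positivity)
    _ = (2 * L - 2 * (1 - exp L ^ (-α)) / α) / α := by
        rw [hL_def]; field_simp; ring
end

section
/- Let α > 1. If C is a constant such that ∑_{m=1}^∞ ∑_{n=1}^∞ a_m b_n (mn)^{α−1/2} / max(m,n)^{2α} ≤ C · ‖a‖_{ℓ²} ‖b‖_{ℓ²} for all square-summable sequences a = (a_n)_{n≥1}, b = (b_n)_{n≥1} of nonnegative reals, then C ≥ 2 − ζ(2α)/ζ(2α−1). (This is witnessed by the sequence a_n = b_n = n^{1/2−α}.) -/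
open Function Real

private lemma pnat_coe_injective : Function.Injective (fun n : ℕ+ => (n : ℕ)) :=
  fun _ _ h => PNat.coe_injective h

private lemma pnat_tsum_eq {f : ℕ → ℝ} (hf : f 0 = 0) :
    ∑' n : ℕ+, f (n : ℕ) = ∑' n : ℕ, f n := by
  refine pnat_coe_injective.tsum_eq ?_
  intro n hn
  simp only [Function.mem_support, ne_eq] at hn
  rcases Nat.eq_zero_or_pos n with h0 | h0
  · exact absurd (h0 ▸ hf) hn
  · exact ⟨⟨n, h0⟩, rfl⟩

private lemma pnat_summable_iff {f : ℕ → ℝ} (hf : f 0 = 0) :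
    Summable (fun n : ℕ+ => f (n : ℕ)) ↔ Summable f := by
  have := pnat_coe_injective.summable_iff (f := f) ?_
  · exact this
  · intro n hn
    rcases Nat.eq_zero_or_pos n with h0 | h0
    · exact h0 ▸ hf
    · exact absurd ⟨⟨n, h0⟩, rfl⟩ hn

private lemma summable_pnat_rpow {p : ℝ} (hp : 1 < p) :
    Summable (fun n : ℕ+ => (n : ℝ) ^ (-p)) := by
  have h0 : ((0 : ℕ) : ℝ) ^ (-p) = 0 := by
    rw [Nat.cast_zero, Real.zero_rpow (by linarith)]
  exact (pnat_summable_iff h0).2 (Real.summable_nat_rpow.2 (by linarith))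

private lemma count_le (m : ℕ+) (c : ℝ) :
    ∑' n : ℕ+, (if n ≤ m then c else 0) = (m : ℝ) * c := by
  rw [tsum_eq_sum (s := Finset.Icc 1 m) (f := fun n : ℕ+ => if n ≤ m then c else 0) ?_]
  · rw [Finset.sum_congr rfl (fun n hn => if_pos (Finset.mem_Icc.1 hn).2),
      Finset.sum_const, PNat.card_Icc]
    simp [nsmul_eq_mul]
  · intro n hn
    have : ¬ n ≤ m := fun hle => hn (Finset.mem_Icc.2 ⟨n.one_le, hle⟩)
    simp [this]

private lemma count_lt (n : ℕ+) (c : ℝ) :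
    ∑' m : ℕ+, (if m < n then c else 0) = ((n : ℝ) - 1) * c := by
  rw [tsum_eq_sum (s := Finset.Ico 1 n) (f := fun m : ℕ+ => if m < n then c else 0) ?_]
  · rw [Finset.sum_congr rfl (fun m hm => if_pos (Finset.mem_Ico.1 hm).2),
      Finset.sum_const, PNat.card_Ico, nsmul_eq_mul]
    congr 1
    have h1 : (1:ℕ) ≤ (n:ℕ) := n.one_le
    push_cast [h1]
    ring
  · intro m hm
    have : ¬ m < n := fun hlt => hm (Finset.mem_Ico.2 ⟨m.one_le, hlt⟩)
    simp [this]

/-- For `α > 1`, any constant `C` valid in the Hilbert-type inequality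
`∑_{m,n} a_m b_n (mn)^{α-1/2} / max(m,n)^{2α} ≤ C ‖a‖_{ℓ²} ‖b‖_{ℓ²}` for all nonnegative
square-summable sequences satisfies `C ≥ 2 - ζ(2α)/ζ(2α-1)`,
where `ζ(s) = ∑_{n≥1} n^{-s}`. -/
theorem bilinear_form_lower_bound_improved (α : ℝ) (hα : 1 < α) (C : ℝ)
    (hC : ∀ a b : ℕ+ → ℝ, (∀ n, 0 ≤ a n) → (∀ n, 0 ≤ b n) →
      (Summable fun n => a n ^ 2) → (Summable fun n => b n ^ 2) →
      ∑' (m : ℕ+) (n : ℕ+),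
          a m * b n * ((m : ℝ) * (n : ℝ)) ^ (α - 1/2) / (max (m : ℝ) (n : ℝ)) ^ (2*α)
        ≤ C * (Real.sqrt (∑' n : ℕ+, a n ^ 2) * Real.sqrt (∑' n : ℕ+, b n ^ 2))) :
    C ≥ 2 - (∑' n : ℕ+, (n : ℝ) ^ (-(2*α))) / (∑' n : ℕ+, (n : ℝ) ^ (-(2*α - 1))) := by
  set Z0 : ℝ := ∑' n : ℕ+, (n : ℝ) ^ (-(2*α)) with hZ0def
  set Z1 : ℝ := ∑' n : ℕ+, (n : ℝ) ^ (-(2*α - 1)) with hZ1def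
  have hpos : ∀ n : ℕ+, (0 : ℝ) < (n : ℝ) := fun n => by exact_mod_cast n.pos
  have hZ0sum : Summable (fun n : ℕ+ => (n : ℝ) ^ (-(2*α))) :=
    summable_pnat_rpow (by linarith)
  have hZ1sum : Summable (fun n : ℕ+ => (n : ℝ) ^ (-(2*α - 1))) :=
    summable_pnat_rpow (by linarith)
  have hZ1pos : 0 < Z1 := by
    refine Summable.tsum_pos hZ1sum (fun n => Real.rpow_nonneg (hpos n).le _) 1 ?_
    exact Real.rpow_pos_of_pos (by norm_num) _
  -- the test sequence
  set f : ℕ+ → ℝ := fun n => (n : ℝ) ^ ((1:ℝ)/2 - α) with hfdef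
  have hfnonneg : ∀ n, 0 ≤ f n := fun n => Real.rpow_nonneg (hpos n).le _
  have hfsq : ∀ n : ℕ+, f n ^ 2 = (n : ℝ) ^ (-(2*α - 1)) := by
    intro n
    rw [hfdef]
    rw [sq, ← Real.rpow_add (hpos n)]
    norm_num
    ring_nf
  have hfsq' : (fun n : ℕ+ => f n ^ 2) = fun n : ℕ+ => (n : ℝ) ^ (-(2*α - 1)) :=
    funext hfsq
  have hfsum : Summable (fun n : ℕ+ => f n ^ 2) := by rw [hfsq']; exact hZ1sum
  -- the kernel values at the test sequence
  have hterm : ∀ m n : ℕ+,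
      f m * f n * ((m : ℝ) * (n : ℝ)) ^ (α - 1/2) / (max (m : ℝ) (n : ℝ)) ^ (2*α)
        = (max (m : ℝ) (n : ℝ)) ^ (-(2*α)) := by
    intro m n
    have hmax : (0 : ℝ) < max (m : ℝ) (n : ℝ) := lt_max_of_lt_left (hpos m)
    have h1 : f m * f n * ((m : ℝ) * (n : ℝ)) ^ (α - 1/2) = 1 := by
      rw [Real.mul_rpow (hpos m).le (hpos n).le, hfdef]
      have hm : (m : ℝ) ^ ((1:ℝ)/2 - α) * (m : ℝ) ^ (α - 1/2) = 1 := by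
        rw [← Real.rpow_add (hpos m)]; norm_num
      have hn : (n : ℝ) ^ ((1:ℝ)/2 - α) * (n : ℝ) ^ (α - 1/2) = 1 := by
        rw [← Real.rpow_add (hpos n)]; norm_num
      calc ((m:ℝ) ^ ((1:ℝ)/2 - α)) * ((n:ℝ) ^ ((1:ℝ)/2 - α)) *
            ((m:ℝ) ^ (α - 1/2) * (n:ℝ) ^ (α - 1/2))
          = ((m:ℝ) ^ ((1:ℝ)/2 - α) * (m:ℝ) ^ (α - 1/2)) *
            ((n:ℝ) ^ ((1:ℝ)/2 - α) * (n:ℝ) ^ (α - 1/2)) := by ring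
        _ = 1 := by rw [hm, hn, mul_one]
    rw [h1, Real.rpow_neg hmax.le, one_div]
  -- kernel and its decomposition
  set M : ℕ+ → ℕ+ → ℝ := fun m n => (max (m : ℝ) (n : ℝ)) ^ (-(2*α)) with hMdef
  set P : ℕ+ → ℕ+ → ℝ := fun m n => if n ≤ m then (m : ℝ) ^ (-(2*α)) else 0 with hPdef
  set Q : ℕ+ → ℕ+ → ℝ := fun m n => if m < n then (n : ℝ) ^ (-(2*α)) else 0 with hQdef
  have hMPQ : ∀ m n, M m n = P m n + Q m n := by
    intro m n
    rcases le_or_gt n m with h | h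
    · have hr : (n : ℝ) ≤ (m : ℝ) := by exact_mod_cast h
      simp [hMdef, hPdef, hQdef, h, not_lt.2 h, max_eq_left hr]
    · have hr : (m : ℝ) ≤ (n : ℝ) := by exact_mod_cast h.le
      simp [hMdef, hPdef, hQdef, not_le.2 h, h, max_eq_right hr]
  have hMnonneg : ∀ m n, 0 ≤ M m n := fun m n =>
    Real.rpow_nonneg (le_max_of_le_left (hpos m).le) _
  have hQnonneg : ∀ m n, 0 ≤ Q m n := by
    intro m n; rw [hQdef]; dsimp only
    split
    · exact Real.rpow_nonneg (hpos n).le _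
    · exact le_refl 0
  -- summability over pairs, by comparison with a product kernel
  have hK : Summable (fun p : ℕ+ × ℕ+ => (p.1 : ℝ) ^ (-α) * (p.2 : ℝ) ^ (-α)) :=
    (summable_pnat_rpow hα).mul_of_nonneg (summable_pnat_rpow hα)
      (fun n => Real.rpow_nonneg (hpos n).le _) (fun n => Real.rpow_nonneg (hpos n).le _)
  have hMK : ∀ p : ℕ+ × ℕ+, Function.uncurry M p ≤ (p.1 : ℝ) ^ (-α) * (p.2 : ℝ) ^ (-α) := by
    rintro ⟨m, n⟩
    have hmax : (0 : ℝ) < max (m : ℝ) (n : ℝ) := lt_max_of_lt_left (hpos m)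
    have h1 : Function.uncurry M (m, n)
        = (max (m:ℝ) (n:ℝ)) ^ (-α) * (max (m:ℝ) (n:ℝ)) ^ (-α) := by
      show M m n = _
      rw [hMdef]
      dsimp only
      rw [← Real.rpow_add hmax]
      ring_nf
    rw [h1]
    have h2 : (max (m:ℝ) (n:ℝ)) ^ (-α) ≤ (m:ℝ) ^ (-α) :=
      Real.rpow_le_rpow_of_nonpos (hpos m) (le_max_left _ _) (by linarith)
    have h3 : (max (m:ℝ) (n:ℝ)) ^ (-α) ≤ (n:ℝ) ^ (-α) :=
      Real.rpow_le_rpow_of_nonpos (hpos n) (le_max_right _ _) (by linarith)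
    exact mul_le_mul h2 h3 (Real.rpow_nonneg hmax.le _) (Real.rpow_nonneg (hpos m).le _)
  have hMsum : Summable (Function.uncurry M) :=
    Summable.of_nonneg_of_le (fun p => hMnonneg p.1 p.2) hMK hK
  have hQM : ∀ p : ℕ+ × ℕ+, Function.uncurry Q p ≤ Function.uncurry M p := by
    rintro ⟨m, n⟩
    show Q m n ≤ M m n
    rw [hMPQ m n]
    have : 0 ≤ P m n := by
      rw [hPdef]; dsimp only
      split
      · exact Real.rpow_nonneg (hpos m).le _
      · exact le_refl 0
    linarith
  have hQsum : Summable (Function.uncurry Q) :=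
    Summable.of_nonneg_of_le (fun p => hQnonneg p.1 p.2) hQM hMsum
  have hQsumm : ∀ m, Summable (fun n => Q m n) := fun m => hQsum.prod_factor m
  have hPsumm : ∀ m, Summable (fun n => P m n) := by
    intro m
    apply summable_of_ne_finset_zero (s := Finset.Icc 1 m)
    intro n hn
    rw [hPdef]; dsimp only
    rw [if_neg]
    intro hle
    exact hn (Finset.mem_Icc.2 ⟨n.one_le, hle⟩)
  -- rewriting the weighted zeta sum
  have hwz : (fun m : ℕ+ => (m:ℝ) * (m:ℝ) ^ (-(2*α))) = fun m : ℕ+ => (m:ℝ) ^ (-(2*α - 1)) := by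
    funext m
    rw [show -(2*α - 1) = 1 + -(2*α) by ring, Real.rpow_add (hpos m), Real.rpow_one]
  have hh : Summable (fun m : ℕ+ => (m:ℝ) * (m:ℝ) ^ (-(2*α))) := by
    rw [hwz]; exact hZ1sum
  have hZ1eq : ∑' m : ℕ+, (m:ℝ) * (m:ℝ) ^ (-(2*α)) = Z1 := by
    rw [hwz, hZ1def]
  -- inner sums
  have hinner : ∀ m, ∑' n, M m n = (m:ℝ) * (m:ℝ) ^ (-(2*α)) + ∑' n, Q m n := by
    intro m
    calc ∑' n, M m n = ∑' n, (P m n + Q m n) := tsum_congr (fun n => hMPQ m n)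
      _ = (∑' n, P m n) + ∑' n, Q m n := Summable.tsum_add (hPsumm m) (hQsumm m)
      _ = (m:ℝ) * (m:ℝ) ^ (-(2*α)) + ∑' n, Q m n := by rw [hPdef]; rw [count_le]
  have hQT : Summable (fun m => ∑' n, Q m n) :=
    (hQsum.hasSum.prod_fiberwise (fun m => (hQsumm m).hasSum)).summable
  -- the double sum over Q
  have hQQ : ∑' m, ∑' n, Q m n = Z1 - Z0 := by
    rw [← Summable.tsum_comm hQsum]
    have h1 : ∀ n : ℕ+, ∑' m, Q m n = ((n:ℝ) - 1) * (n:ℝ) ^ (-(2*α)) := by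
      intro n
      rw [hQdef]
      exact count_lt n _
    calc ∑' n, ∑' m, Q m n = ∑' n : ℕ+, ((n:ℝ) - 1) * (n:ℝ) ^ (-(2*α)) := tsum_congr h1
      _ = ∑' n : ℕ+, ((n:ℝ) * (n:ℝ) ^ (-(2*α)) - (n:ℝ) ^ (-(2*α))) := by
          apply tsum_congr; intro n; ring
      _ = (∑' n : ℕ+, (n:ℝ) * (n:ℝ) ^ (-(2*α))) - ∑' n : ℕ+, (n:ℝ) ^ (-(2*α)) :=
          Summable.tsum_sub hh hZ0sum
      _ = Z1 - Z0 := by rw [hZ1eq, hZ0def]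
  -- total sum
  have hS : ∑' m, ∑' n, M m n = 2 * Z1 - Z0 := by
    calc ∑' m, ∑' n, M m n
        = ∑' m : ℕ+, ((m:ℝ) * (m:ℝ) ^ (-(2*α)) + ∑' n, Q m n) := tsum_congr hinner
      _ = (∑' m : ℕ+, (m:ℝ) * (m:ℝ) ^ (-(2*α))) + ∑' m, ∑' n, Q m n := Summable.tsum_add hh hQT
      _ = Z1 + (Z1 - Z0) := by rw [hZ1eq, hQQ]
      _ = 2 * Z1 - Z0 := by ring
  -- apply the hypothesis
  have happ := hC f f hfnonneg hfnonneg hfsum hfsum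
  have hLHS : ∑' (m : ℕ+) (n : ℕ+),
      f m * f n * ((m : ℝ) * (n : ℝ)) ^ (α - 1/2) / (max (m : ℝ) (n : ℝ)) ^ (2*α)
      = ∑' m, ∑' n, M m n :=
    tsum_congr (fun m => tsum_congr (fun n => hterm m n))
  rw [hLHS, hS] at happ
  simp only [hfsq] at happ
  rw [← hZ1def, Real.mul_self_sqrt hZ1pos.le] at happ
  have h2 : (2 * Z1 - Z0) / Z1 ≤ C := by
    rw [div_le_iff₀ hZ1pos]; linarith
  have h3 : 2 - Z0 / Z1 = (2 * Z1 - Z0) / Z1 := by field_simp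
  rw [ge_iff_le, h3]
  exact h2
end
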